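/- Let f_k(r) = r^k e^{-r}/k! and fix T > 0 and 0 < t ≤ T. Then the limit as k → ∞ of (∫_k^{k+t} f_k(r) dr)/(∫_k^{k+T} f_k(r) dr) equals t/T. -/

import Mathlib

/-!
On `[k, k + T]` the density `f_k` lies between `f_k(k) e^{-T²/k}` and its maximum `f_k(k)`:
writing `r^k e^{-r} = k^k e^{-k} exp (k log (r/k) - (r - k))`, the bounds
`1 - k/r ≤ log (r/k) ≤ r/k - 1` put the exponent in `[-(r - k)²/k, 0]`. Hence `f_k` is nearly
constant on `[k, k + T]`, both integrals are `≈ (length) · f_k(k)`, and their ratio is squeezed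
between `(t/T) e^{-T²/k}` and `(t/T) e^{T²/k}`.
-/

open MeasureTheory Filter

/-- The gamma density `f_k(r) = r^k e^{-r}/k!`. -/
noncomputable def gammaDens (k : ℕ) (r : ℝ) : ℝ := r ^ k * Real.exp (-r) / (Nat.factorial k)

open Set

lemma pow_mul_exp_neg_eq {k : ℕ} (hk : k ≠ 0) {r : ℝ} (hr : 0 < r) :
    r ^ k * Real.exp (-r) =
      k ^ k * Real.exp (-k) * Real.exp (k * Real.log (r / k) - (r - k)) := by
  have hk0 : (0 : ℝ) < k := by positivity
  rw [sub_eq_add_neg, Real.exp_add, Real.exp_nat_mul, Real.exp_log (div_pos hr hk0), div_pow,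
    mul_mul_mul_comm, ← Real.exp_add, mul_div_cancel₀ _ (pow_ne_zero _ hk0.ne')]
  ring_nf

lemma mul_log_div_sub_sub_nonpos {K r : ℝ} (hK : 0 < K) (hr : 0 < r) :
    K * Real.log (r / K) - (r - K) ≤ 0 := by
  have := mul_le_mul_of_nonneg_left (Real.log_le_sub_one_of_pos (div_pos hr hK)) hK.le
  rw [mul_sub, mul_div_cancel₀ _ hK.ne', mul_one] at this
  linarith

lemma neg_sq_div_le_mul_log_div_sub_sub {K r : ℝ} (hK : 0 < K) (hKr : K ≤ r) :
    -((r - K) ^ 2 / K) ≤ K * Real.log (r / K) - (r - K) := by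
  have hr : 0 < r := hK.trans_le hKr
  have hlog := mul_le_mul_of_nonneg_left
    (Real.one_sub_inv_le_log_of_pos (div_pos hr hK)) hK.le
  have hsq : (r - K) ^ 2 / r ≤ (r - K) ^ 2 / K := by gcongr
  have hid : K * (1 - (r / K)⁻¹) - (r - K) = -((r - K) ^ 2 / r) := by
    field_simp
    ring
  linarith

lemma gammaDens_eq_mul_exp {k : ℕ} (hk : k ≠ 0) {r : ℝ} (hr : 0 < r) :
    gammaDens k r = gammaDens k k * Real.exp (k * Real.log (r / k) - (r - k)) := by
  rw [gammaDens, gammaDens, pow_mul_exp_neg_eq hk hr]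
  ring

lemma gammaDens_continuous (k : ℕ) : Continuous (gammaDens k) := by
  unfold gammaDens
  fun_prop

lemma gammaDens_self_pos {k : ℕ} (hk : k ≠ 0) : 0 < gammaDens k k := by
  unfold gammaDens
  positivity

lemma gammaDens_le_gammaDens_self {k : ℕ} (hk : k ≠ 0) {r : ℝ} (hr : 0 < r) :
    gammaDens k r ≤ gammaDens k k := by
  rw [gammaDens_eq_mul_exp hk hr]
  refine mul_le_of_le_one_right (gammaDens_self_pos hk).le (Real.exp_le_one_iff.mpr ?_)
  exact mul_log_div_sub_sub_nonpos (by positivity) hr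

lemma gammaDens_self_mul_exp_le {k : ℕ} (hk : k ≠ 0) {r : ℝ} (hr : k ≤ r) :
    gammaDens k k * Real.exp (-((r - k) ^ 2 / k)) ≤ gammaDens k r := by
  have hk0 : (0 : ℝ) < k := by positivity
  rw [gammaDens_eq_mul_exp hk (hk0.trans_le hr)]
  gcongr
  · exact (gammaDens_self_pos hk).le
  · exact neg_sq_div_le_mul_log_div_sub_sub hk0 hr

lemma sub_mul_le_intervalIntegral {f : ℝ → ℝ} {a b m : ℝ} (hab : a ≤ b)
    (hf : IntervalIntegrable f volume a b) (hm : ∀ x ∈ Icc a b, m ≤ f x) :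
    (b - a) * m ≤ ∫ x in a..b, f x := by
  simpa using intervalIntegral.integral_mono_on hab intervalIntegrable_const hf hm

lemma intervalIntegral_le_sub_mul {f : ℝ → ℝ} {a b M : ℝ} (hab : a ≤ b)
    (hf : IntervalIntegrable f volume a b) (hM : ∀ x ∈ Icc a b, f x ≤ M) :
    ∫ x in a..b, f x ≤ (b - a) * M := by
  simpa using intervalIntegral.integral_mono_on hab hf intervalIntegrable_const hM

lemma div_intervalIntegral_mem_Icc {f : ℝ → ℝ} {a t T A c : ℝ}
    (hf : IntervalIntegrable f volume a (a + T)) (hA : 0 < A) (hc : 0 < c)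
    (ht : 0 ≤ t) (hT : 0 < T) (htT : t ≤ T)
    (hlo : ∀ x ∈ Icc a (a + T), A * c ≤ f x) (hhi : ∀ x ∈ Icc a (a + T), f x ≤ A) :
    (∫ x in a..a + t, f x) / (∫ x in a..a + T, f x) ∈ Icc ((t / T) * c) ((t / T) / c) := by
  have hsub : Icc a (a + t) ⊆ Icc a (a + T) := Icc_subset_Icc_right (by linarith)
  have hft : IntervalIntegrable f volume a (a + t) :=
    hf.mono_set (by rw [uIcc_of_le (by linarith), uIcc_of_le (by linarith)]; exact hsub)
  have num_lo := sub_mul_le_intervalIntegral (by linarith) hft fun x hx => hlo x (hsub hx)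
  have num_hi := intervalIntegral_le_sub_mul (by linarith) hft fun x hx => hhi x (hsub hx)
  have den_lo := sub_mul_le_intervalIntegral (by linarith) hf hlo
  have den_hi := intervalIntegral_le_sub_mul (by linarith) hf hhi
  simp only [add_sub_cancel_left] at num_lo num_hi den_lo den_hi
  have den_pos : 0 < ∫ x in a..a + T, f x := lt_of_lt_of_le (by positivity) den_lo
  constructor
  · calc (t / T) * c = (t * (A * c)) / (T * A) := by field_simp
      _ ≤ _ := div_le_div₀ ((by positivity : (0 : ℝ) ≤ t * (A * c)).trans num_lo) num_lo
          den_pos den_hi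
  · calc (∫ x in a..a + t, f x) / (∫ x in a..a + T, f x) ≤ (t * A) / (T * (A * c)) :=
          div_le_div₀ (by positivity) num_hi (by positivity) den_lo
      _ = (t / T) / c := by field_simp

lemma gammaDens_mem_Icc {k : ℕ} (hk : k ≠ 0) {T r : ℝ} (hr : r ∈ Icc (k : ℝ) (k + T)) :
    gammaDens k r ∈ Icc (gammaDens k k * Real.exp (-(T ^ 2 / k))) (gammaDens k k) := by
  have hk0 : (0 : ℝ) < k := by positivity
  refine ⟨le_trans ?_ (gammaDens_self_mul_exp_le hk hr.1),
    gammaDens_le_gammaDens_self hk (hk0.trans_le hr.1)⟩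
  gcongr
  · exact (gammaDens_self_pos hk).le
  · linarith [hr.1]
  · linarith [hr.2]

theorem stmt_11 (T t : ℝ) (hT : 0 < T) (ht0 : 0 < t) (htT : t ≤ T) :
    Tendsto (fun k : ℕ =>
        (∫ r in (k : ℝ)..(k + t), gammaDens k r) / (∫ r in (k : ℝ)..(k + T), gammaDens k r))
      atTop (nhds (t / T)) := by
  set c : ℕ → ℝ := fun k => Real.exp (-(T ^ 2 / k))
  have hc : Tendsto c atTop (nhds 1) := by
    simpa using ((tendsto_const_div_atTop_nhds_zero_nat (T ^ 2)).neg).rexp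
  have hbounds : ∀ᶠ k : ℕ in atTop,
      (∫ r in (k : ℝ)..(k + t), gammaDens k r) / (∫ r in (k : ℝ)..(k + T), gammaDens k r) ∈
        Icc ((t / T) * c k) ((t / T) / c k) := by
    filter_upwards [eventually_ne_atTop 0] with k hk
    exact div_intervalIntegral_mem_Icc ((gammaDens_continuous k).intervalIntegrable _ _)
      (gammaDens_self_pos hk) (Real.exp_pos _) ht0.le hT htT
      (fun r hr => (gammaDens_mem_Icc hk hr).1) (fun r hr => (gammaDens_mem_Icc hk hr).2)
  refine tendsto_of_tendsto_of_tendsto_of_le_of_le' ?_ ?_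
    (hbounds.mono fun _ h => h.1) (hbounds.mono fun _ h => h.2)
  · simpa using tendsto_const_nhds.mul hc
  · simpa [Pi.div_def] using tendsto_const_nhds.div hc one_ne_zero
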